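/- For every floating-point system S (a finite set of rationals representable as ±0.d₁⋯d_p × β^e with digits 0 ≤ d_i ≤ β−1 and exponent e ∈ [−n, n], equipped with rounding addition), there exists k ∈ ℕ such that for every finite multiset M of elements of S, the sum of M computed in increasing order equals the sum of the k-projection of M (the multiset obtained by capping each multiplicity at k) computed in increasing order. -/

import Mathlib

/-!
Every float `x` is exactly representable, so `0 ⊕ x = x` and an increasing-order sum is a left fold
from `0`. In that fold all copies of a value `a` are added consecutively. Since the current partial
sum `s` is itself a candidate for the rounding of `s + a`, the rounded result lies between `s` and
`s + 2a`: the partial sums move monotonically in the direction of `a` through the finite set of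
floats, so after `#D` additions of `a` they are stuck. Copies of `a` beyond the `#D`-th therefore
do not change the sum, and `k = #D` works.
-/

/-- The set of rationals representable as `±0.d₁⋯d_p × β^e` with digits `0 ≤ dᵢ ≤ β−1`
and exponent `e ∈ [−n, n]`, i.e. rationals of the form `(m / β^p) * β^e` with `|m| < β^p`. -/
def FloatReprSet (p n β : ℕ) : Set ℚ :=
  {q | ∃ m : ℤ, m.natAbs < β ^ p ∧ ∃ e : ℤ, e.natAbs ≤ n ∧
    q = ((m : ℚ) / (β : ℚ) ^ p) * (β : ℚ) ^ e}

/-- `add` is a rounding addition for the finite set `D` of floats: the result of adding two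
elements of `D` lies in `D` and is a nearest element of `D` to the exact rational sum
(this covers rounding to nearest, any tie-breaking rule, and capping overflow at the maximum). -/
def IsRoundingAdd (D : Set ℚ) (add : ℚ → ℚ → ℚ) : Prop :=
  ∀ x ∈ D, ∀ y ∈ D, add x y ∈ D ∧ ∀ d ∈ D, |add x y - (x + y)| ≤ |d - (x + y)|

/-- The `k`-projection of a multiset: every multiplicity is capped at `k`. -/
noncomputable def capProj {α : Type*} (k : ℕ) (M : Multiset α) : Multiset α :=
  letI := Classical.decEq α
  M.toFinset.val.bind fun a => Multiset.replicate (min k (M.count a)) a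

/-- Summing a multiset of rationals in increasing numerical order using the addition `add`. -/
noncomputable def sumInc (add : ℚ → ℚ → ℚ) (M : Multiset ℚ) : ℚ :=
  match M.sort (· ≤ ·) with
  | [] => 0
  | a :: l => l.foldl add a

lemma count_capProj {α : Type*} [DecidableEq α] (k : ℕ) (M : Multiset α) (x : α) :
    (capProj k M).count x = min k (M.count x) := by
  rw [capProj, Subsingleton.elim (Classical.decEq α) ‹_›, Multiset.count_bind,
    Multiset.toFinset_val, Multiset.sum_map_eq_nsmul_single x fun b hb _ => by
      rw [Multiset.count_replicate, if_neg hb]]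
  by_cases hx : x ∈ M
  · simp [hx]
  · simp [Multiset.count_eq_zero.mpr hx]

lemma capProj_of_count_le {α : Type*} [DecidableEq α] {k : ℕ} {M : Multiset α}
    (h : ∀ x, M.count x ≤ k) : capProj k M = M :=
  Multiset.ext.mpr fun x => by rw [count_capProj, min_eq_right (h x)]

lemma capProj_erase_of_lt_count {α : Type*} [DecidableEq α] {k : ℕ} {M : Multiset α} {a : α}
    (h : k < M.count a) : capProj k (M.erase a) = capProj k M := by
  ext x
  rw [count_capProj, count_capProj]
  obtain rfl | hx := eq_or_ne x a
  · rw [Multiset.count_erase_self]; omega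
  · rw [Multiset.count_erase_of_ne hx]

lemma List.foldl_replicate_eq_iterate {α β : Type*} (f : β → α → β) (a : α) (m : ℕ) (b : β) :
    (List.replicate m a).foldl f b = (fun t => f t a)^[m] b := by
  induction m generalizing b with
  | zero => rfl
  | succ m ih => rw [List.replicate_succ, List.foldl_cons, ih, Function.iterate_succ_apply]

lemma Multiset.sort_eq_filter_lt_append {α : Type*} [LinearOrder α] (M : Multiset α) (a : α) :
    M.sort (· ≤ ·) = (M.filter (· < a)).sort (· ≤ ·) ++ List.replicate (M.count a) a ++
      (M.filter (a < ·)).sort (· ≤ ·) := by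
  refine List.Perm.eq_of_pairwise' (Multiset.pairwise_sort _ _) ?_ ?_
  · simp only [List.pairwise_append, Multiset.pairwise_sort, List.pairwise_replicate,
      List.mem_replicate, Multiset.mem_sort, Multiset.mem_filter, List.mem_append]
    grind
  · rw [← Multiset.coe_eq_coe, ← Multiset.coe_add, ← Multiset.coe_add, Multiset.coe_replicate,
      Multiset.sort_eq, Multiset.sort_eq, Multiset.sort_eq]
    ext x
    simp only [Multiset.count_add, Multiset.count_filter, Multiset.count_replicate]
    rcases lt_trichotomy x a with h | rfl | h
    · simp [h, h.ne', h.asymm]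
    · simp
    · simp [h, h.ne, h.asymm]

lemma Multiset.filter_erase_of_not {α : Type*} [DecidableEq α] (p : α → Prop) [DecidablePred p]
    (M : Multiset α) {a : α} (ha : ¬ p a) : (M.erase a).filter p = M.filter p := by
  rw [← Multiset.sub_singleton, Multiset.filter_sub, Multiset.filter_singleton, if_neg ha,
    Multiset.empty_eq_zero, Multiset.sub_zero]

lemma Function.iterate_eq_of_isFixedPt {α : Type*} {f : α → α} {x : α} {i j : ℕ}
    (hfix : Function.IsFixedPt f (f^[i] x)) (hij : i ≤ j) : f^[j] x = f^[i] x := by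
  obtain ⟨d, rfl⟩ := Nat.exists_eq_add_of_le hij
  rw [add_comm, Function.iterate_add_apply, Function.iterate_fixed hfix]

lemma Function.exists_isFixedPt_iterate_of_monotone {α : Type*} [PartialOrder α] {f : α → α}
    {x : α} {s : Finset α} (hmono : Monotone (f^[·] x)) (hs : ∀ j, f^[j] x ∈ s) :
    ∃ i < s.card, Function.IsFixedPt f (f^[i] x) := by
  obtain ⟨i, hi, i', hi', hne, heq⟩ := Finset.exists_ne_map_eq_of_card_lt_of_maps_to
    (s := Finset.range (s.card + 1)) (by simp) fun j _ => hs j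
  wlog hlt : i < i' generalizing i i'
  · exact this i' hi' i hi hne.symm heq.symm (by omega)
  rw [Finset.mem_range] at hi'
  have hstep : f^[i] x ≤ f^[i + 1] x := hmono i.le_succ
  have hback : f^[i + 1] x ≤ f^[i] x := heq ▸ hmono hlt
  rw [Function.iterate_succ_apply'] at hstep hback
  exact ⟨i, by omega, le_antisymm hback hstep⟩

lemma Function.iterate_eq_iterate_card_of_monotone {α : Type*} [PartialOrder α] {f : α → α}
    {x : α} {s : Finset α} (hmono : Monotone (f^[·] x)) (hs : ∀ j, f^[j] x ∈ s) {j : ℕ}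
    (hj : s.card ≤ j) : f^[j] x = f^[s.card] x := by
  obtain ⟨i, hi, hfix⟩ := Function.exists_isFixedPt_iterate_of_monotone hmono hs
  rw [Function.iterate_eq_of_isFixedPt hfix (by omega),
    Function.iterate_eq_of_isFixedPt hfix hi.le]

namespace IsRoundingAdd

variable {D : Set ℚ} {add : ℚ → ℚ → ℚ}

lemma add_mem (hadd : IsRoundingAdd D add) {x y : ℚ} (hx : x ∈ D) (hy : y ∈ D) :
    add x y ∈ D :=
  (hadd x hx y hy).1

lemma abs_sub_le (hadd : IsRoundingAdd D add) {x y : ℚ} (hx : x ∈ D) (hy : y ∈ D) :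
    |add x y - (x + y)| ≤ |y| := by
  simpa using (hadd x hx y hy).2 x hx

lemma add_eq_of_add_mem (hadd : IsRoundingAdd D add) {x y : ℚ} (hx : x ∈ D) (hy : y ∈ D)
    (hxy : x + y ∈ D) : add x y = x + y := by
  simpa [sub_eq_zero] using (hadd x hx y hy).2 (x + y) hxy

lemma zero_add (hadd : IsRoundingAdd D add) (h0 : (0 : ℚ) ∈ D) {x : ℚ} (hx : x ∈ D) :
    add 0 x = x := by
  simpa using hadd.add_eq_of_add_mem h0 hx (by simpa using hx)

lemma le_add_of_nonneg (hadd : IsRoundingAdd D add) {x y : ℚ} (hx : x ∈ D) (hy : y ∈ D)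
    (hy0 : 0 ≤ y) : x ≤ add x y := by
  have := hadd.abs_sub_le hx hy
  rw [abs_of_nonneg hy0, abs_le] at this
  linarith

lemma add_le_of_nonpos (hadd : IsRoundingAdd D add) {x y : ℚ} (hx : x ∈ D) (hy : y ∈ D)
    (hy0 : y ≤ 0) : add x y ≤ x := by
  have := hadd.abs_sub_le hx hy
  rw [abs_of_nonpos hy0, abs_le] at this
  linarith

lemma foldl_mem (hadd : IsRoundingAdd D add) {l : List ℚ} (hl : ∀ x ∈ l, x ∈ D) {s : ℚ}
    (hs : s ∈ D) : l.foldl add s ∈ D := by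
  induction l generalizing s with
  | nil => exact hs
  | cons b l ih =>
    simp only [List.mem_cons, forall_eq_or_imp] at hl
    exact ih hl.2 (hadd.add_mem hs hl.1)

lemma iterate_eq_iterate_card {D : Finset ℚ} (hadd : IsRoundingAdd D add) {a s : ℚ}
    (ha : a ∈ D) (hs : s ∈ D) {j : ℕ} (hj : D.card ≤ j) :
    (fun t => add t a)^[j] s = (fun t => add t a)^[D.card] s := by
  have hmaps : Set.MapsTo (fun t => add t a) D D := fun t ht => hadd.add_mem ht ha
  have horbit : ∀ j, (fun t => add t a)^[j] s ∈ D := fun j => hmaps.iterate j hs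
  rcases le_total 0 a with ha0 | ha0
  · refine Function.iterate_eq_iterate_card_of_monotone (monotone_nat_of_le_succ fun j => ?_)
      horbit hj
    rw [Function.iterate_succ_apply']
    exact hadd.le_add_of_nonneg (horbit j) ha ha0
  · refine Function.iterate_eq_iterate_card_of_monotone (α := ℚᵒᵈ)
      (monotone_nat_of_le_succ fun j => ?_) horbit hj
    change (fun t => add t a)^[j + 1] s ≤ (fun t => add t a)^[j] s
    rw [Function.iterate_succ_apply']
    exact hadd.add_le_of_nonpos (horbit j) ha ha0

end IsRoundingAdd

lemma sumInc_eq_foldl_zero {add : ℚ → ℚ → ℚ} {M : Multiset ℚ} (hM : ∀ x ∈ M, add 0 x = x) :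
    sumInc add M = (M.sort (· ≤ ·)).foldl add 0 := by
  unfold sumInc
  rcases hsort : M.sort (· ≤ ·) with _ | ⟨a, l⟩
  · rfl
  · have ha : a ∈ M := by rw [← Multiset.mem_sort (· ≤ ·), hsort]; exact List.mem_cons_self
    rw [List.foldl_cons, hM a ha]

lemma sumInc_erase_of_card_lt_count {D : Finset ℚ} {add : ℚ → ℚ → ℚ}
    (hadd : IsRoundingAdd D add) (h0 : (0 : ℚ) ∈ D) {M : Multiset ℚ} (hM : ∀ x ∈ M, x ∈ D)
    {a : ℚ} (ha : D.card < M.count a) : sumInc add (M.erase a) = sumInc add M := by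
  have haD : a ∈ D := hM a (Multiset.count_pos.mp (by omega))
  have hbelow : ((M.filter (· < a)).sort (· ≤ ·)).foldl add 0 ∈ D :=
    hadd.foldl_mem (fun x hx => hM x (Multiset.mem_of_mem_filter ((Multiset.mem_sort _).mp hx)))
      h0
  rw [sumInc_eq_foldl_zero fun x hx => hadd.zero_add h0 (hM x (Multiset.mem_of_mem_erase hx)),
    sumInc_eq_foldl_zero fun x hx => hadd.zero_add h0 (hM x hx),
    Multiset.sort_eq_filter_lt_append _ a, Multiset.sort_eq_filter_lt_append M a,
    Multiset.filter_erase_of_not (· < a) M (lt_irrefl a),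
    Multiset.filter_erase_of_not (a < ·) M (lt_irrefl a),
    Multiset.count_erase_self]
  simp only [List.foldl_append, List.foldl_replicate_eq_iterate]
  rw [hadd.iterate_eq_iterate_card haD hbelow (by omega),
    hadd.iterate_eq_iterate_card haD hbelow ha.le]

lemma sumInc_capProj_card {D : Finset ℚ} {add : ℚ → ℚ → ℚ} (hadd : IsRoundingAdd D add)
    (h0 : (0 : ℚ) ∈ D) (M : Multiset ℚ) (hM : ∀ x ∈ M, x ∈ D) :
    sumInc add M = sumInc add (capProj D.card M) := by
  induction M using Multiset.strongInductionOn with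
  | ih M IH =>
    by_cases hcount : ∀ x, M.count x ≤ D.card
    · rw [capProj_of_count_le hcount]
    · push Not at hcount
      obtain ⟨a, ha⟩ := hcount
      have haM : a ∈ M := Multiset.count_pos.mp (by omega)
      rw [← sumInc_erase_of_card_lt_count hadd h0 hM ha, ← capProj_erase_of_lt_count ha]
      exact IH _ (Multiset.erase_lt.mpr haM) fun x hx => hM x (Multiset.mem_of_mem_erase hx)

lemma floatReprSet_finite (p n β : ℕ) : (FloatReprSet p n β).Finite := by
  refine (((Set.finite_Icc (-((β ^ p : ℕ) : ℤ)) (β ^ p : ℕ)).prod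
    (Set.finite_Icc (-(n : ℤ)) n)).image
    fun me : ℤ × ℤ => ((me.1 : ℚ) / (β : ℚ) ^ p) * (β : ℚ) ^ me.2).subset ?_
  rintro q ⟨m, hm, e, he, rfl⟩
  exact ⟨(m, e), ⟨⟨by omega, by omega⟩, ⟨by omega, by omega⟩⟩, rfl⟩

lemma zero_mem_floatReprSet (p n : ℕ) {β : ℕ} (hβ : 0 < β) : (0 : ℚ) ∈ FloatReprSet p n β :=
  ⟨0, by simp [pow_pos hβ p], 0, by simp, by simp⟩

theorem floating_point_sum_bound
    (p n β : ℕ) (hβ : 2 ≤ β)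
    (add : ℚ → ℚ → ℚ) (hadd : IsRoundingAdd (FloatReprSet p n β) add) :
    ∃ k : ℕ, ∀ M : Multiset ℚ, (∀ x ∈ M, x ∈ FloatReprSet p n β) →
      sumInc add M = sumInc add (capProj k M) := by
  have hD := floatReprSet_finite p n β
  have h0 : (0 : ℚ) ∈ hD.toFinset := by simpa using zero_mem_floatReprSet p n (by omega)
  rw [← hD.coe_toFinset] at hadd
  exact ⟨hD.toFinset.card, fun M hM => sumInc_capProj_card hadd h0 M (by simpa using hM)⟩
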